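/- Let f be a probability density supported on [-1,1] with c_d \le f \le C_d on [-1,1], and p(x,t) = (\varphi_t * f)(x). Then for t > 1 and all |x| \le 1 + C\sqrt{t}, one has (2 c_d/\sqrt{t}) \phi(C+2) \le p(x,t) \le C_d \sqrt{2/\pi} / \sqrt{t}; that is, p(x,t) is of order 1/\sqrt{t} uniformly on this region. -/

import Mathlib

/-! For `μ ∈ [-1, 1]` and `t ≥ 1` we have `|x - μ| ≤ (C + 2)√t`, so by the scaling
`φ_t(y) = φ(y/√t)/√t` the kernel `φ_t(x - μ)` lies between `φ(C + 2)/√t` and `φ(0)/√t`.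
Multiplying by `c_d ≤ f ≤ C_d` and integrating over an interval of length `2` gives both
bounds, with `2 φ(0) = √(2/π)`. -/

open MeasureTheory Real

/-- Density of `N(0,t)`. -/
noncomputable def gaussDensity (t x : ℝ) : ℝ :=
  (Real.sqrt (2 * Real.pi * t))⁻¹ * Real.exp (-x ^ 2 / (2 * t))

/-- Standard Gaussian density. -/
noncomputable def stdGauss (x : ℝ) : ℝ := gaussDensity 1 x

open Set

theorem gaussDensity_nonneg (t x : ℝ) : 0 ≤ gaussDensity t x := by
  unfold gaussDensity
  positivity

theorem stdGauss_nonneg (x : ℝ) : 0 ≤ stdGauss x :=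
  gaussDensity_nonneg 1 x

theorem gaussDensity_eq_stdGauss_div {t : ℝ} (ht : 0 < t) (y : ℝ) :
    gaussDensity t y = stdGauss (y / √t) / √t := by
  unfold stdGauss gaussDensity
  rw [sqrt_mul (by positivity) t, div_pow, sq_sqrt ht.le]
  field_simp

theorem stdGauss_le_stdGauss {x y : ℝ} (h : |x| ≤ |y|) : stdGauss y ≤ stdGauss x := by
  unfold stdGauss gaussDensity
  gcongr ?_ * exp (?_ / _)
  exact neg_le_neg (sq_le_sq.2 h)

theorem two_mul_stdGauss_zero : 2 * stdGauss 0 = √(2 / π) := by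
  have hπ : √π ≠ 0 := (sqrt_pos.2 pi_pos).ne'
  unfold stdGauss gaussDensity
  rw [sqrt_div zero_le_two, mul_one, sqrt_mul zero_le_two]
  field_simp
  simp

theorem gaussDensity_le_stdGauss_zero_div {t : ℝ} (ht : 0 < t) (y : ℝ) :
    gaussDensity t y ≤ stdGauss 0 / √t := by
  rw [gaussDensity_eq_stdGauss_div ht]
  gcongr
  exact stdGauss_le_stdGauss (by simp)

theorem stdGauss_div_le_gaussDensity {t a y : ℝ} (ht : 0 < t) (hy : |y| ≤ a * √t) :
    stdGauss a / √t ≤ gaussDensity t y := by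
  have hst : 0 < √t := sqrt_pos.2 ht
  rw [gaussDensity_eq_stdGauss_div ht]
  gcongr
  refine stdGauss_le_stdGauss ((le_abs_self a).trans' ?_)
  rwa [abs_div, abs_of_pos hst, div_le_iff₀ hst]

theorem continuous_gaussDensity (t : ℝ) : Continuous (gaussDensity t) := by
  unfold gaussDensity
  fun_prop

theorem integral_mem_Icc_of_forall_notMem_Icc_eq_zero {g : ℝ → ℝ} {a b m M : ℝ} (hab : a ≤ b)
    (hg : AEStronglyMeasurable g) (hzero : ∀ x ∉ Icc a b, g x = 0)
    (hbounds : ∀ x ∈ Icc a b, g x ∈ Icc m M) :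
    ∫ x, g x ∈ Icc (m * (b - a)) (M * (b - a)) := by
  have hint : IntegrableOn g (Icc a b) := by
    refine Measure.integrableOn_of_bounded (M := max |m| |M|) (by simp) hg
      (ae_restrict_of_forall_mem measurableSet_Icc fun x hx => ?_)
    exact abs_le_max_abs_abs (hbounds x hx).1 (hbounds x hx).2
  have hvol : volume.real (Icc a b) = b - a := by simp [hab]
  rw [← setIntegral_eq_integral_of_forall_compl_eq_zero hzero]
  constructor
  · calc m * (b - a) = ∫ _ in Icc a b, m := by
          rw [setIntegral_const, hvol, smul_eq_mul, mul_comm]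
      _ ≤ ∫ x in Icc a b, g x :=
        setIntegral_mono_on (integrableOn_const (by simp)) hint measurableSet_Icc
          fun x hx => (hbounds x hx).1
  · calc ∫ x in Icc a b, g x ≤ ∫ _ in Icc a b, M :=
          setIntegral_mono_on hint (integrableOn_const (by simp)) measurableSet_Icc
            fun x hx => (hbounds x hx).2
      _ = M * (b - a) := by rw [setIntegral_const, hvol, smul_eq_mul, mul_comm]

theorem diffused_density_order_large_t_general
    (f : ℝ → ℝ) (c_d C_d : ℝ)
    (hf0 : ∀ x, 0 ≤ f x) (hmeas : Measurable f)
    (hsupp : ∀ x, x ∉ Set.Icc (-1 : ℝ) 1 → f x = 0)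
    (hbounds : ∀ x ∈ Set.Icc (-1 : ℝ) 1, c_d ≤ f x ∧ f x ≤ C_d)
    (C t x : ℝ) (ht : 1 < t)
    (hx : |x| ≤ 1 + C * Real.sqrt t) :
    (2 * c_d / Real.sqrt t) * stdGauss (C + 2)
        ≤ ∫ μ, gaussDensity t (x - μ) * f μ ∧
    (∫ μ, gaussDensity t (x - μ) * f μ)
        ≤ C_d * Real.sqrt (2 / Real.pi) / Real.sqrt t := by
  have ht0 : 0 < t := one_pos.trans ht
  have hst : 1 ≤ √t := one_le_sqrt.2 ht.le
  have hintegrand : ∀ μ ∈ Icc (-1 : ℝ) 1, gaussDensity t (x - μ) * f μ ∈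
      Icc (stdGauss (C + 2) / √t * c_d) (stdGauss 0 / √t * C_d) := by
    intro μ hμ
    have hdist : |x - μ| ≤ (C + 2) * √t := by
      have hμ_abs : |μ| ≤ 1 := abs_le.2 hμ
      linarith [abs_sub x μ]
    have hlower := stdGauss_div_le_gaussDensity ht0 hdist
    have hupper := gaussDensity_le_stdGauss_zero_div ht0 (x - μ)
    exact ⟨mul_le_mul_of_nonneg hlower (hbounds μ hμ).1
        (div_nonneg (stdGauss_nonneg _) (sqrt_nonneg t)) (hf0 μ),
      mul_le_mul hupper (hbounds μ hμ).2 (hf0 μ) ((gaussDensity_nonneg t _).trans hupper)⟩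
  have hmeas_integrand : Measurable fun μ => gaussDensity t (x - μ) * f μ :=
    ((continuous_gaussDensity t).comp (continuous_sub_left x)).measurable.mul hmeas
  obtain ⟨hlo, hhi⟩ := integral_mem_Icc_of_forall_notMem_Icc_eq_zero (by norm_num)
    hmeas_integrand.aestronglyMeasurable
    (fun μ hμ => by simp [hsupp μ hμ]) hintegrand
  constructor
  · calc 2 * c_d / √t * stdGauss (C + 2) = stdGauss (C + 2) / √t * c_d * (1 - -1) := by ring
      _ ≤ _ := hlo
  · calc _ ≤ stdGauss 0 / √t * C_d * (1 - -1) := hhi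
      _ = _ := by rw [← two_mul_stdGauss_zero]; ring

/-- If `f` is a probability density supported on `[-1,1]` with `c_d ≤ f ≤ C_d` there, then for
`t > 1` and all `|x| ≤ 1 + C√t`, the diffused density `p(x,t) = (φ_t * f)(x)` satisfies
`(2c_d/√t)·φ(C+2) ≤ p(x,t) ≤ C_d·√(2/π)/√t`; in particular `p(x,t)` is of order `1/√t`. -/
theorem diffused_density_order_large_t
    (f : ℝ → ℝ) (c_d C_d : ℝ) (hc : 0 < c_d) (hcC : c_d ≤ C_d)
    (hf0 : ∀ x, 0 ≤ f x) (hmeas : Measurable f)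
    (hsupp : ∀ x, x ∉ Set.Icc (-1 : ℝ) 1 → f x = 0)
    (hfint : ∫ x, f x = 1)
    (hbounds : ∀ x ∈ Set.Icc (-1 : ℝ) 1, c_d ≤ f x ∧ f x ≤ C_d)
    (C t x : ℝ) (hC : 0 < C) (ht : 1 < t)
    (hx : |x| ≤ 1 + C * Real.sqrt t) :
    (2 * c_d / Real.sqrt t) * stdGauss (C + 2)
        ≤ ∫ μ, gaussDensity t (x - μ) * f μ ∧
    (∫ μ, gaussDensity t (x - μ) * f μ)
        ≤ C_d * Real.sqrt (2 / Real.pi) / Real.sqrt t :=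
  diffused_density_order_large_t_general f c_d C_d hf0 hmeas hsupp hbounds C t x ht hx
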